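/- Continuity of the spherical splitting function β: Let d ≥ 1 and let x, u ∈ ℝ^{d+1} satisfy ‖x‖ = ‖u‖ = 1 and ⟪x, u⟫ = 0. Define β : 𝕊^d → ℝ by β(y) = 0 if y = x or y = −x, and β(y) = arccos(⟪y, u⟫ / √(1 − ⟪x, y⟫²)) · √(1 − ⟪x, y⟫²) otherwise. Then β is continuous on 𝕊^d (with the subspace topology). -/

import Mathlib

open scoped InnerProductSpace

noncomputable section

open Classical in
/-- The spherical splitting function `β` associated with a root `x` and an edge
direction `u`. -/
def sphBeta {d : ℕ} (x u : EuclideanSpace ℝ (Fin (d + 1)))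
    (y : EuclideanSpace ℝ (Fin (d + 1))) : ℝ :=
  if y = x ∨ y = -x then 0
  else Real.arccos (⟪y, u⟫_ℝ / Real.sqrt (1 - ⟪x, y⟫_ℝ ^ 2)) *
    Real.sqrt (1 - ⟪x, y⟫_ℝ ^ 2)

/-!
Off the radicand's zero set `1 - ⟪x, y⟫² = 0` the formula for `β` is a composition of continuous
maps. Since `arccos` takes values in `[0, π]`, `|β y| ≤ π √(1 - ⟪x, y⟫²)`, which forces continuity
(with value `0`) where the radicand vanishes. On the unit sphere the exceptional points `y = ±x`
have vanishing radicand, so there `β` agrees with the formula.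
-/

open Real

theorem Continuous.arccos_div_sqrt_mul_sqrt {X : Type*} [TopologicalSpace X] {f g : X → ℝ}
    (hf : Continuous f) (hg : Continuous g) :
    Continuous fun y => arccos (f y / √(g y)) * √(g y) := by
  have hsqrt : Continuous fun y => √(g y) := hg.sqrt
  refine continuous_iff_continuousAt.2 fun y₀ => ?_
  rcases lt_or_ge 0 (g y₀) with hpos | hnonpos
  · exact ((hf.continuousAt.div hsqrt.continuousAt (sqrt_pos.2 hpos).ne').arccos).mul
      hsqrt.continuousAt
  · have hzero : √(g y₀) = 0 := sqrt_eq_zero_of_nonpos hnonpos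
    have hbound : ∀ y, ‖arccos (f y / √(g y)) * √(g y)‖ ≤ π * √(g y) := fun y => by
      rw [norm_mul, norm_of_nonneg (arccos_nonneg _), norm_of_nonneg (sqrt_nonneg _)]
      gcongr
      exact arccos_le_pi _
    have hlim : Filter.Tendsto (fun y => π * √(g y)) (nhds y₀) (nhds 0) :=
      (continuous_const.mul hsqrt).tendsto' y₀ 0 (by simp [hzero])
    simpa [ContinuousAt, hzero] using squeeze_zero_norm hbound hlim

theorem sphBeta_of_norm_eq_one {d : ℕ} (x u : EuclideanSpace ℝ (Fin (d + 1)))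
    {y : EuclideanSpace ℝ (Fin (d + 1))} (hy : ‖y‖ = 1) :
    sphBeta x u y = arccos (⟪y, u⟫_ℝ / √(1 - ⟪x, y⟫_ℝ ^ 2)) * √(1 - ⟪x, y⟫_ℝ ^ 2) := by
  unfold sphBeta
  split_ifs with h
  · rcases h with rfl | rfl
    · simp [hy]
    · rw [norm_neg] at hy
      simp [hy]
  · rfl

theorem spherical_splitting_function_continuous_general
    (d : ℕ)
    (x u : EuclideanSpace ℝ (Fin (d + 1))) :
    Continuous fun y : Metric.sphere (0 : EuclideanSpace ℝ (Fin (d + 1))) 1 =>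
      sphBeta x u (y : EuclideanSpace ℝ (Fin (d + 1))) := by
  have hformula : Continuous fun y : EuclideanSpace ℝ (Fin (d + 1)) =>
      arccos (⟪y, u⟫_ℝ / √(1 - ⟪x, y⟫_ℝ ^ 2)) * √(1 - ⟪x, y⟫_ℝ ^ 2) :=
    Continuous.arccos_div_sqrt_mul_sqrt (by fun_prop) (by fun_prop)
  refine (hformula.comp continuous_subtype_val).congr fun y => ?_
  exact (sphBeta_of_norm_eq_one x u (norm_eq_of_mem_sphere y)).symm

/-- Continuity of the spherical splitting function `β` on the unit sphere
`𝕊^d` (with the subspace topology). -/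
theorem spherical_splitting_function_continuous
    (d : ℕ) (hd : 1 ≤ d)
    (x u : EuclideanSpace ℝ (Fin (d + 1)))
    (hx : ‖x‖ = 1) (hu : ‖u‖ = 1) (hxu : ⟪x, u⟫_ℝ = 0) :
    Continuous fun y : Metric.sphere (0 : EuclideanSpace ℝ (Fin (d + 1))) 1 =>
      sphBeta x u (y : EuclideanSpace ℝ (Fin (d + 1))) :=
  spherical_splitting_function_continuous_general d x u
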